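/- arXiv:1903.12385 — 2 statements merged into one kernel-verified Lean document; each statement's English description precedes it below -/
import Mathlib

section
/- Vizing's Adjacency Lemma: Let G be an edge-chromatic critical simple graph and let xy be an edge of G. Then at least Δ(G) − d_G(y) + 1 vertices in N(x)∖{y} have degree Δ(G). -/
open Finset

namespace SCF

variable {V : Type*}

/-- Degree of `v` in `F` (as the cardinality of its neighbor set). -/
noncomputable def deg [Fintype V] (F : SimpleGraph V) (v : V) : ℕ :=
  (F.neighborSet v).ncard

/-- Number of isolated vertices of `G - S`. -/
noncomputable def iso [Fintype V] (G : SimpleGraph V) (S : Set V) : ℕ :=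
  {v | v ∉ S ∧ ∀ w, G.Adj v w → w ∈ S}.ncard

/-- The component of `v` in `F` is a single edge `K_{1,1}`. -/
def IsK11Comp [Fintype V] (F : SimpleGraph V) (v : V) : Prop :=
  deg F v = 1 ∧ ∀ w, F.Adj v w → deg F w = 1

/-- The component of `v` in `F` is a path on three vertices `K_{1,2}`. -/
def IsK12Comp [Fintype V] (F : SimpleGraph V) (v : V) : Prop :=
  ∃ c a b, a ≠ b ∧ F.Adj c a ∧ F.Adj c b ∧ deg F c = 2 ∧ deg F a = 1 ∧ deg F b = 1 ∧
    (v = c ∨ v = a ∨ v = b)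

/-- The component of `v` in `F` is a cycle (2-regular connected, so length ≥ 3). -/
def IsCycleComp [Fintype V] (F : SimpleGraph V) (v : V) : Prop :=
  ∀ w, F.Reachable v w → deg F w = 2

/-- The component of `v` in `F` is an odd cycle. -/
def IsOddCycleComp [Fintype V] (F : SimpleGraph V) (v : V) : Prop :=
  IsCycleComp F v ∧ Odd {w | F.Reachable v w}.ncard

/-- The component of `v` in `F` is a star `K_{1,i}` for some `i ≥ 1`. -/
def IsStarComp [Fintype V] (F : SimpleGraph V) (v : V) : Prop :=
  ∃ c, (v = c ∨ F.Adj c v) ∧ 0 < deg F c ∧ ∀ w, F.Adj c w → deg F w = 1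

/-- The component of `v` in `F` is a star `K_{1,i}` with `1 ≤ i ≤ n`. -/
def IsStarAtMostComp [Fintype V] (F : SimpleGraph V) (n : ℕ) (v : V) : Prop :=
  ∃ c, (v = c ∨ F.Adj c v) ∧ 0 < deg F c ∧ deg F c ≤ n ∧ ∀ w, F.Adj c w → deg F w = 1

/-- `F` is a `{K_{1,1}, C_m : m ≥ 3}`-factor of `G`. -/
def IsK11CycleFactor [Fintype V] (G F : SimpleGraph V) : Prop :=
  F ≤ G ∧ ∀ v, IsK11Comp F v ∨ IsCycleComp F v

/-- `F` is a `{K_{1,1}, K_{1,2}, C_m : m ≥ 3}`-factor of `G`. -/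
def IsK11K12CycleFactor [Fintype V] (G F : SimpleGraph V) : Prop :=
  F ≤ G ∧ ∀ v, IsK11Comp F v ∨ IsK12Comp F v ∨ IsCycleComp F v

/-- Number of `K_{1,2}`-components of `F`, counted by their centers. -/
noncomputable def countK12 [Fintype V] (F : SimpleGraph V) : ℕ :=
  {v | deg F v = 2 ∧ ∀ w, F.Adj v w → deg F w = 1}.ncard

/-- `min(G, K_{1,2})`: the minimum number of `K_{1,2}`-components over all
`{K_{1,1}, K_{1,2}, C_m : m ≥ 3}`-factors of `G`. -/
noncomputable def minK12 [Fintype V] (G : SimpleGraph V) : ℕ :=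
  sInf {t | ∃ F, IsK11K12CycleFactor G F ∧ countK12 F = t}

/-- `f` is a fractional matching of `G`. -/
def IsFracMatching [Fintype V] [DecidableEq V] (G : SimpleGraph V) [DecidableRel G.Adj]
    (f : Sym2 V → ℝ) : Prop :=
  (∀ e, 0 ≤ f e ∧ f e ≤ 1) ∧ (∀ e, e ∉ G.edgeSet → f e = 0) ∧
    ∀ v : V, ∑ e ∈ G.edgeFinset, (if v ∈ e then f e else 0) ≤ 1

/-- Total weight of a fractional matching. -/
def weight [Fintype V] [DecidableEq V] (G : SimpleGraph V) [DecidableRel G.Adj]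
    (f : Sym2 V → ℝ) : ℝ :=
  ∑ e ∈ G.edgeFinset, f e

/-- The fractional matching number `μ_f(G)`. -/
noncomputable def nuF [Fintype V] [DecidableEq V] (G : SimpleGraph V) [DecidableRel G.Adj] : ℝ :=
  sSup (weight G '' {f | IsFracMatching G f})

/-- `f` is a maximum fractional matching of `G`. -/
def IsMaxFracMatching [Fintype V] [DecidableEq V] (G : SimpleGraph V) [DecidableRel G.Adj]
    (f : Sym2 V → ℝ) : Prop :=
  IsFracMatching G f ∧ weight G f = nuF G

/-- `s` is an independent set of vertices of `G`. -/
def IsIndepSet (G : SimpleGraph V) (s : Set V) : Prop :=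
  ∀ ⦃u⦄, u ∈ s → ∀ ⦃w⦄, w ∈ s → ¬ G.Adj u w

/-- The independence number `α(G)`. -/
noncomputable def alpha [Fintype V] (G : SimpleGraph V) : ℕ :=
  sSup {n | ∃ s : Set V, IsIndepSet G s ∧ s.ncard = n}

/-- `G` has a proper edge coloring with `k` colors. -/
def HasProperEdgeColoring (G : SimpleGraph V) (k : ℕ) : Prop :=
  ∃ c : Sym2 V → Fin k, ∀ e₁ ∈ G.edgeSet, ∀ e₂ ∈ G.edgeSet,
    e₁ ≠ e₂ → ∀ v : V, v ∈ e₁ → v ∈ e₂ → c e₁ ≠ c e₂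

/-- The chromatic index `χ'(G)`: the minimum number of colors (equivalently matchings)
needed to properly color the edges of `G`. -/
noncomputable def chromIdx (G : SimpleGraph V) : ℕ :=
  sInf {k | HasProperEdgeColoring G k}

/-- `G` is a `k`-critical graph. -/
def IsCriticalWith [Fintype V] (G : SimpleGraph V) [DecidableRel G.Adj] (k : ℕ) : Prop :=
  2 ≤ k ∧ G.maxDegree = k ∧ chromIdx G = k + 1 ∧
    ∀ H : SimpleGraph V, H < G → chromIdx H ≤ k

/-- `G` is an edge-chromatic critical graph. -/
def IsCritical [Fintype V] (G : SimpleGraph V) [DecidableRel G.Adj] : Prop :=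
  ∃ k, IsCriticalWith G k

/-- `G` is factor-critical: deleting any vertex leaves a graph with a perfect matching. -/
def IsFactorCritical (G : SimpleGraph V) : Prop :=
  ∀ v : V, ∃ M : G.Subgraph, M.verts = {v}ᶜ ∧ M.IsMatching

end SCF

open SCF

namespace VAL
open SCF
open scoped Classical
set_option linter.unusedSectionVars false

variable {V : Type*} [Fintype V] [DecidableEq V]

/-- properness of an edge-coloring, in convenient form -/
def Proper (F : SimpleGraph V) {k : ℕ} (c : Sym2 V → Fin k) : Prop :=
  ∀ ⦃u v w : V⦄, F.Adj u v → F.Adj u w → v ≠ w → c s(u, v) ≠ c s(u, w)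

/-- color `a` is present at `v` -/
def Pres (F : SimpleGraph V) {k : ℕ} (c : Sym2 V → Fin k) (v : V) (a : Fin k) : Prop :=
  ∃ w, F.Adj v w ∧ c s(v, w) = a

lemma sym2_ne_of_ne {p q t w : V} (h1 : t ≠ p) (h2 : t ≠ q) : s(t, w) ≠ s(p, q) := by
  intro h
  rcases Sym2.eq_iff.mp h with ⟨h, _⟩ | ⟨h, _⟩ <;> [exact h1 h; exact h2 h]

lemma sym2_mem_cases {p q t : V} (h : t ∈ s(p, q)) : t = p ∨ t = q := Sym2.mem_iff.mp h

/-- every edge containing `v` can be written `s(v,t)` -/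
lemma edge_eq_of_mem {F : SimpleGraph V} {e : Sym2 V} (he : e ∈ F.edgeSet) {v : V}
    (hv : v ∈ e) : ∃ t, F.Adj v t ∧ e = s(v, t) := by
  induction e using Sym2.ind with
  | _ p q =>
    rw [SimpleGraph.mem_edgeSet] at he
    rcases sym2_mem_cases hv with rfl | rfl
    · exact ⟨q, he, rfl⟩
    · exact ⟨p, he.symm, Sym2.eq_swap⟩

lemma proper_of_hpec {F : SimpleGraph V} {k : ℕ} (h : HasProperEdgeColoring F k) :
    ∃ c : Sym2 V → Fin k, Proper F c := by
  obtain ⟨c, hc⟩ := h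
  refine ⟨c, fun u v w huv huw hvw => ?_⟩
  refine hc _ ((F.mem_edgeSet).mpr huv) _ ((F.mem_edgeSet).mpr huw)
    (fun hEq => ?_) u (Sym2.mem_mk_left u v) (Sym2.mem_mk_left u w)
  rcases Sym2.eq_iff.mp hEq with ⟨_, h2⟩ | ⟨h1, h2⟩
  · exact hvw h2
  · exact F.loopless.irrefl u (h1 ▸ huw)

lemma hpec_of_proper {F : SimpleGraph V} {k : ℕ} (c : Sym2 V → Fin k) (h : Proper F c) :
    HasProperEdgeColoring F k := by
  refine ⟨c, fun e₁ he₁ e₂ he₂ hne v hv₁ hv₂ => ?_⟩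
  obtain ⟨t₁, ha₁, rfl⟩ := edge_eq_of_mem he₁ hv₁
  obtain ⟨t₂, ha₂, rfl⟩ := edge_eq_of_mem he₂ hv₂
  exact h ha₁ ha₂ (fun ht => hne (by rw [ht]))

lemma hpec_mono {F : SimpleGraph V} {m n : ℕ} (h : m ≤ n) (hm : HasProperEdgeColoring F m) :
    HasProperEdgeColoring F n := by
  obtain ⟨c, hc⟩ := hm
  refine ⟨fun e => Fin.castLE h (c e), fun e₁ he₁ e₂ he₂ hne v hv₁ hv₂ hEq => ?_⟩
  exact hc e₁ he₁ e₂ he₂ hne v hv₁ hv₂ (Fin.castLE_injective h hEq)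

lemma hpec_card (F : SimpleGraph V) : HasProperEdgeColoring F (Fintype.card (Sym2 V)) := by
  refine ⟨fun e => Fintype.equivFin (Sym2 V) e, fun e₁ _ e₂ _ hne _ _ _ hEq => ?_⟩
  exact hne ((Fintype.equivFin (Sym2 V)).injective hEq)

lemma exists_proper_of_chromIdx_le {F : SimpleGraph V} {n : ℕ} (h : chromIdx F ≤ n) :
    ∃ c : Sym2 V → Fin n, Proper F c := by
  have hne : {k | HasProperEdgeColoring F k}.Nonempty := ⟨_, hpec_card F⟩
  have hmem : HasProperEdgeColoring F (chromIdx F) := Nat.sInf_mem hne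
  exact proper_of_hpec (hpec_mono h hmem)

lemma chromIdx_le_of_proper {F : SimpleGraph V} {k : ℕ} (c : Sym2 V → Fin k)
    (h : Proper F c) : chromIdx F ≤ k :=
  Nat.sInf_le (hpec_of_proper c h)

section PresentCount

variable {F : SimpleGraph V} [DecidableRel F.Adj] {k : ℕ}

/-- the set of colors present at `v` -/
noncomputable def presF (F : SimpleGraph V) [DecidableRel F.Adj] {k : ℕ}
    (c : Sym2 V → Fin k) (v : V) : Finset (Fin k) :=
  (F.neighborFinset v).image (fun w => c s(v, w))

lemma mem_presF {c : Sym2 V → Fin k} {v : V} {a : Fin k} :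
    a ∈ presF F c v ↔ Pres F c v a := by
  simp [presF, Pres, SimpleGraph.mem_neighborFinset]

lemma card_presF {c : Sym2 V → Fin k} (hc : Proper F c) (v : V) :
    (presF F c v).card = F.degree v := by
  rw [presF, Finset.card_image_of_injOn, SimpleGraph.degree]
  intro w hw w' hw' hEq
  by_contra hne
  exact hc ((F.mem_neighborFinset v w).mp hw) ((F.mem_neighborFinset v w').mp hw') hne hEq

lemma exists_miss {c : Sym2 V → Fin k} (hc : Proper F c) {v : V}
    (hdeg : F.degree v < k) : ∃ a, ¬ Pres F c v a := by
  have hcard : (presF F c v).card < (Finset.univ : Finset (Fin k)).card := by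
    rw [card_presF hc, Finset.card_univ, Fintype.card_fin]; exact hdeg
  by_contra h
  push_neg at h
  have hsub : (Finset.univ : Finset (Fin k)) ⊆ presF F c v := fun a _ => mem_presF.mpr (h a)
  exact absurd (Finset.card_le_card hsub) (not_le.mpr hcard)

end PresentCount

section Update

variable {V : Type*} [Fintype V] [DecidableEq V] {F : SimpleGraph V} {k : ℕ} {c : Sym2 V → Fin k}

lemma pres_update_of_ne {p q t : V} {a δ : Fin k} (htp : t ≠ p) (htq : t ≠ q) :
    Pres F (Function.update c s(p, q) a) t δ ↔ Pres F c t δ := by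
  constructor <;> rintro ⟨w, hw, he⟩ <;> refine ⟨w, hw, ?_⟩
  · rwa [Function.update_of_ne (sym2_ne_of_ne htp htq) _ _] at he
  · rwa [Function.update_of_ne (sym2_ne_of_ne htp htq) _ _]

lemma miss_update_freed (hc : Proper F c) {p q : V} (hadj : F.Adj p q) {a : Fin k}
    (hne : c s(p, q) ≠ a) : ¬ Pres F (Function.update c s(p, q) a) p (c s(p, q)) := by
  rintro ⟨w, hw, he⟩
  by_cases hwq : w = q
  · subst hwq; rw [Function.update_self] at he; exact hne he.symm
  · rw [Function.update_of_ne (fun h => hwq (Sym2.congr_right.mp h)) _ _] at he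
    exact hc hw hadj hwq he

lemma proper_update (hc : Proper F c) {p q : V} {a : Fin k}
    (hp : ¬ Pres F c p a) (hq : ¬ Pres F c q a) :
    Proper F (Function.update c s(p, q) a) := by
  intro u v w huv huw hvw
  by_cases h1 : s(u, v) = s(p, q) <;> by_cases h2 : s(u, w) = s(p, q)
  · exact absurd (Sym2.congr_right.mp (h1.trans h2.symm)) hvw
  · rw [h1, Function.update_self, Function.update_of_ne h2 _ _]
    rcases Sym2.eq_iff.mp h1 with ⟨hup, _⟩ | ⟨hup, _⟩ <;> subst hup <;> intro hEq
    · exact hp ⟨w, huw, hEq.symm⟩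
    · exact hq ⟨w, huw, hEq.symm⟩
  · rw [h2, Function.update_self, Function.update_of_ne h1 _ _]
    rcases Sym2.eq_iff.mp h2 with ⟨hup, _⟩ | ⟨hup, _⟩ <;> subst hup <;> intro hEq
    · exact hp ⟨v, huv, hEq⟩
    · exact hq ⟨v, huv, hEq⟩
  · rw [Function.update_of_ne h1 _ _, Function.update_of_ne h2 _ _]
    exact hc huv huw hvw

lemma proper_extend {G : SimpleGraph V} {x y : V} {c : Sym2 V → Fin k}
    (hc : Proper (G.deleteEdges {s(x, y)}) c) {a : Fin k}
    (hx : ¬ Pres (G.deleteEdges {s(x, y)}) c x a)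
    (hy : ¬ Pres (G.deleteEdges {s(x, y)}) c y a) :
    Proper G (Function.update c s(x, y) a) := by
  set H := G.deleteEdges {s(x, y)} with hH
  have hHadj : ∀ u v, G.Adj u v → s(u, v) ≠ s(x, y) → H.Adj u v := by
    intro u v h hne
    rw [hH, SimpleGraph.deleteEdges_adj]
    exact ⟨h, by simpa using hne⟩
  intro u v w huv huw hvw
  by_cases h1 : s(u, v) = s(x, y) <;> by_cases h2 : s(u, w) = s(x, y)
  · exact absurd (Sym2.congr_right.mp (h1.trans h2.symm)) hvw
  · rw [h1, Function.update_self, Function.update_of_ne h2 _ _]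
    have hw' : H.Adj u w := hHadj _ _ huw h2
    rcases Sym2.eq_iff.mp h1 with ⟨hup, _⟩ | ⟨hup, _⟩ <;> subst hup <;> intro hEq
    · exact hx ⟨w, hw', hEq.symm⟩
    · exact hy ⟨w, hw', hEq.symm⟩
  · rw [h2, Function.update_self, Function.update_of_ne h1 _ _]
    have hv' : H.Adj u v := hHadj _ _ huv h1
    rcases Sym2.eq_iff.mp h2 with ⟨hup, _⟩ | ⟨hup, _⟩ <;> subst hup <;> intro hEq
    · exact hx ⟨v, hv', hEq⟩
    · exact hy ⟨v, hv', hEq⟩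
  · rw [Function.update_of_ne h1 _ _, Function.update_of_ne h2 _ _]
    exact hc (hHadj _ _ huv h1) (hHadj _ _ huw h2) hvw

lemma no_common_miss {G : SimpleGraph V} (hG : ∀ c' : Sym2 V → Fin k, ¬ Proper G c')
    {x y : V} {c : Sym2 V → Fin k} (hc : Proper (G.deleteEdges {s(x, y)}) c) {a : Fin k}
    (hx : ¬ Pres (G.deleteEdges {s(x, y)}) c x a)
    (hy : ¬ Pres (G.deleteEdges {s(x, y)}) c y a) : False :=
  hG _ (proper_extend hc hx hy)

end Update

section Kempe

variable {V : Type*} [Fintype V] [DecidableEq V]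

/-- the two-colored Kempe subgraph -/
def kempe (F : SimpleGraph V) {k : ℕ} (c : Sym2 V → Fin k) (a b : Fin k) : SimpleGraph V where
  Adj u v := F.Adj u v ∧ (c s(u, v) = a ∨ c s(u, v) = b)
  symm := by
    refine ⟨?_⟩
    intro u v h
    exact ⟨h.1.symm, by rw [Sym2.eq_swap]; exact h.2⟩
  loopless := ⟨fun v h => F.loopless.irrefl v h.1⟩

lemma kempe_adj {F : SimpleGraph V} {k : ℕ} {c : Sym2 V → Fin k} {a b : Fin k} {u v : V} :
    (kempe F c a b).Adj u v ↔ F.Adj u v ∧ (c s(u, v) = a ∨ c s(u, v) = b) := Iff.rfl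

variable {F : SimpleGraph V} {k : ℕ} {c : Sym2 V → Fin k} {a b : Fin k}

lemma kempe_degree_le_two (hc : Proper F c) (t : V) : (kempe F c a b).degree t ≤ 2 := by
  have h2 : ({a, b} : Finset (Fin k)).card ≤ 2 :=
    (Finset.card_insert_le _ _).trans (by simp)
  refine le_trans ?_ h2
  show ((kempe F c a b).neighborFinset t).card ≤ _
  apply Finset.card_le_card_of_injOn (fun w => c s(t, w))
  · intro w hw
    rcases (((kempe F c a b).mem_neighborFinset t w).mp hw).2 with h | h <;> simp [h]
  · intro w hw w' hw' hEq
    by_contra hne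
    exact hc (((kempe F c a b).mem_neighborFinset t w).mp hw).1
      (((kempe F c a b).mem_neighborFinset t w').mp hw').1 hne hEq

lemma kempe_degree_le_one (hc : Proper F c) {d : Fin k} (hd : d = a ∨ d = b)
    {t : V} (hm : ¬ Pres F c t d) : (kempe F c a b).degree t ≤ 1 := by
  have hdm : d ∈ ({a, b} : Finset (Fin k)) := by rcases hd with rfl | rfl <;> simp
  have h2 : (({a, b} : Finset (Fin k)).erase d).card ≤ 1 := by
    rw [Finset.card_erase_of_mem hdm]
    have : ({a, b} : Finset (Fin k)).card ≤ 2 := (Finset.card_insert_le _ _).trans (by simp)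
    omega
  refine le_trans ?_ h2
  show ((kempe F c a b).neighborFinset t).card ≤ _
  apply Finset.card_le_card_of_injOn (fun w => c s(t, w))
  · intro w hw
    obtain ⟨hadj, hcol⟩ := ((kempe F c a b).mem_neighborFinset t w).mp hw
    refine Finset.mem_erase.mpr ⟨fun hEq => hm ⟨w, hadj, hEq⟩, ?_⟩
    rcases hcol with h | h <;> simp [h]
  · intro w hw w' hw' hEq
    by_contra hne
    exact hc (((kempe F c a b).mem_neighborFinset t w).mp hw).1
      (((kempe F c a b).mem_neighborFinset t w').mp hw').1 hne hEq

/-- transposition of two colors -/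
def swapc (a b β : Fin k) : Fin k := if β = a then b else if β = b then a else β

lemma swapc_invol (a b : Fin k) : ∀ β, swapc a b (swapc a b β) = β := by
  intro β
  unfold swapc
  split_ifs <;> simp_all

lemma swapc_inj {a b β γ : Fin k} (h : swapc a b β = swapc a b γ) : β = γ := by
  have := congrArg (swapc a b) h
  rwa [swapc_invol, swapc_invol] at this

lemma swapc_mem {a b β : Fin k} (h : β = a ∨ β = b) : swapc a b β = a ∨ swapc a b β = b := by
  unfold swapc
  rcases h with rfl | rfl <;> split_ifs <;> simp_all

lemma swapc_left (a b : Fin k) : swapc a b a = b := if_pos rfl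

/-- does the edge lie in the Kempe component of `v₀`? -/
def inComp (K : SimpleGraph V) (v₀ : V) (e : Sym2 V) : Prop :=
  e ∈ K.edgeSet ∧ ∃ u ∈ e, K.Reachable v₀ u

/-- the Kempe-swapped coloring -/
noncomputable def kswap (K : SimpleGraph V) (v₀ : V) {k : ℕ} (a b : Fin k)
    (c : Sym2 V → Fin k) : Sym2 V → Fin k :=
  fun e => if inComp K v₀ e then swapc a b (c e) else c e

variable {v₀ : V}

lemma inComp_of_adj_reach {K : SimpleGraph V} {u w : V} (hadj : K.Adj u w)
    (hr : K.Reachable v₀ u) : inComp K v₀ s(u, w) :=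
  ⟨K.mem_edgeSet.mpr hadj, u, Sym2.mem_mk_left u w, hr⟩

lemma reach_of_inComp_adj {K : SimpleGraph V} {u w : V} (h : inComp K v₀ s(u, w)) :
    K.Reachable v₀ u := by
  obtain ⟨hE, t, ht, hr⟩ := h
  have hadj : K.Adj u w := K.mem_edgeSet.mp hE
  rcases sym2_mem_cases ht with rfl | rfl
  · exact hr
  · exact hr.trans hadj.symm.reachable

lemma kswap_eq_of_not_reach {K : SimpleGraph V} (ht : ¬ K.Reachable v₀ t) (w : V) :
    kswap K v₀ a b c s(t, w) = c s(t, w) := by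
  unfold kswap
  rw [if_neg]
  exact fun h => ht (reach_of_inComp_adj h)

lemma pres_kswap_of_not_reach {K : SimpleGraph V} {t : V} (ht : ¬ K.Reachable v₀ t)
    (δ : Fin k) : Pres F (kswap K v₀ a b c) t δ ↔ Pres F c t δ := by
  constructor <;> rintro ⟨w, hw, he⟩ <;> refine ⟨w, hw, ?_⟩
  · rwa [kswap_eq_of_not_reach ht w] at he
  · rwa [kswap_eq_of_not_reach ht w]

lemma proper_kswap (hc : Proper F c) :
    Proper F (kswap (kempe F c a b) v₀ a b c) := by
  set K := kempe F c a b with hK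
  intro u v w huv huw hvw
  unfold kswap
  by_cases h1 : inComp K v₀ s(u, v) <;> by_cases h2 : inComp K v₀ s(u, w)
  · rw [if_pos h1, if_pos h2]
    exact fun hEq => hc huv huw hvw (swapc_inj hEq)
  · rw [if_pos h1, if_neg h2]
    intro hEq
    have hcol1 : c s(u, v) = a ∨ c s(u, v) = b := (K.mem_edgeSet.mp h1.1).2
    have hcol2 : c s(u, w) = a ∨ c s(u, w) = b := by rw [← hEq]; exact swapc_mem hcol1
    exact h2 (inComp_of_adj_reach ⟨huw, hcol2⟩ (reach_of_inComp_adj h1))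
  · rw [if_neg h1, if_pos h2]
    intro hEq
    have hcol2 : c s(u, w) = a ∨ c s(u, w) = b := (K.mem_edgeSet.mp h2.1).2
    have hcol1 : c s(u, v) = a ∨ c s(u, v) = b := by rw [hEq]; exact swapc_mem hcol2
    exact h1 (inComp_of_adj_reach ⟨huv, hcol1⟩ (reach_of_inComp_adj h2))
  · rw [if_neg h1, if_neg h2]
    exact hc huv huw hvw

lemma miss_kswap_reach {u : V} (hr : (kempe F c a b).Reachable v₀ u)
    (hm : ¬ Pres F c u b) : ¬ Pres F (kswap (kempe F c a b) v₀ a b c) u a := by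
  set K := kempe F c a b with hK
  rintro ⟨w, hw, he⟩
  by_cases h : inComp K v₀ s(u, w)
  · unfold kswap at he
    rw [if_pos h] at he
    have h2 : c s(u, w) = swapc a b a := by
      have := congrArg (swapc a b) he
      rwa [swapc_invol] at this
    rw [swapc_left] at h2
    exact hm ⟨w, hw, h2⟩
  · unfold kswap at he
    rw [if_neg h] at he
    exact h (inComp_of_adj_reach ⟨hw, Or.inl he⟩ hr)

lemma pres_kswap_other {K : SimpleGraph V} (hKle : ∀ u w, K.Adj u w →
      (c s(u, w) = a ∨ c s(u, w) = b))
    {t : V} {δ : Fin k} (hδa : δ ≠ a) (hδb : δ ≠ b) :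
    Pres F (kswap K v₀ a b c) t δ ↔ Pres F c t δ := by
  constructor <;> rintro ⟨w, hw, he⟩ <;> refine ⟨w, hw, ?_⟩ <;>
    by_cases h : inComp K v₀ s(t, w)
  · unfold kswap at he
    rw [if_pos h] at he
    rcases swapc_mem (hKle _ _ (K.mem_edgeSet.mp h.1)) with h' | h' <;>
      rw [he] at h' <;> [exact absurd h' hδa; exact absurd h' hδb]
  · unfold kswap at he
    rwa [if_neg h] at he
  · rcases hKle _ _ (K.mem_edgeSet.mp h.1) with h' | h' <;> rw [he] at h' <;>
      [exact absurd h' hδa; exact absurd h' hδb]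
  · unfold kswap
    rwa [if_neg h]

end Kempe


section Walks

variable {V : Type*} [Fintype V] [DecidableEq V]

open SimpleGraph

lemma three_path_aux : ∀ (n : ℕ) {K : SimpleGraph V} (_ : ∀ t, K.degree t ≤ 2)
    {cc prev bb zz : V} (p : K.Walk cc bb) (r : K.Walk cc zz),
    p.IsPath → r.IsPath → K.Adj prev cc → prev ∉ p.support → prev ∉ r.support →
    p.length + r.length ≤ n → zz ∈ p.support ∨ bb ∈ r.support := by
  intro n
  induction n with
  | zero =>
    intro K hdeg cc prev bb zz p r hp hr hadj hpp hpr hlen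
    cases p with
    | nil => exact Or.inr r.start_mem_support
    | cons h q => simp [Walk.length_cons] at hlen
  | succ n ih =>
    intro K hdeg cc prev bb zz p r hp hr hadj hpp hpr hlen
    cases p with
    | nil => exact Or.inr r.start_mem_support
    | @cons _ c₁ _ hpc p₁ =>
      cases r with
      | nil => exact Or.inl (Walk.start_mem_support _)
      | @cons _ c₂ _ hrc r₁ =>
        have hc₁ : c₁ ∈ (Walk.cons hpc p₁).support := by
          rw [Walk.support_cons]; exact List.mem_cons_of_mem _ p₁.start_mem_support
        have hc₂ : c₂ ∈ (Walk.cons hrc r₁).support := by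
          rw [Walk.support_cons]; exact List.mem_cons_of_mem _ r₁.start_mem_support
        have h12 : c₁ = c₂ := by
          by_contra hne
          have hsub : ({prev, c₁, c₂} : Finset V) ⊆ K.neighborFinset cc := by
            intro t ht
            rw [K.mem_neighborFinset]
            rcases Finset.mem_insert.mp ht with rfl | ht
            · exact hadj.symm
            rcases Finset.mem_insert.mp ht with rfl | ht
            · exact hpc
            · rw [Finset.mem_singleton] at ht; subst ht; exact hrc
          have hcard : ({prev, c₁, c₂} : Finset V).card = 3 := by
            rw [Finset.card_insert_of_notMem, Finset.card_insert_of_notMem,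
              Finset.card_singleton]
            · simp [hne]
            · simp only [Finset.mem_insert, Finset.mem_singleton]
              push_neg
              exact ⟨fun h => hpp (h ▸ hc₁), fun h => hpr (h ▸ hc₂)⟩
          have hle : ({prev, c₁, c₂} : Finset V).card ≤ (K.neighborFinset cc).card :=
            Finset.card_le_card hsub
          have hdc : (K.neighborFinset cc).card ≤ 2 := hdeg cc
          omega
        subst h12
        obtain ⟨hp1, hcp1⟩ := (Walk.cons_isPath_iff _ _).mp hp
        obtain ⟨hr1, hcr1⟩ := (Walk.cons_isPath_iff _ _).mp hr
        have hlen' : p₁.length + r₁.length ≤ n := by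
          simp only [Walk.length_cons] at hlen; omega
        rcases ih hdeg p₁ r₁ hp1 hr1 hpc hcp1 hcr1 hlen' with h | h
        · exact Or.inl (by rw [Walk.support_cons]; exact List.mem_cons_of_mem _ h)
        · exact Or.inr (by rw [Walk.support_cons]; exact List.mem_cons_of_mem _ h)

lemma three_path {K : SimpleGraph V} (hdeg : ∀ t, K.degree t ≤ 2) {aa bb zz : V}
    (hda : K.degree aa ≤ 1) (p : K.Walk aa bb) (r : K.Walk aa zz)
    (hp : p.IsPath) (hr : r.IsPath) : zz ∈ p.support ∨ bb ∈ r.support := by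
  cases p with
  | nil => exact Or.inr r.start_mem_support
  | @cons _ c₁ _ hpc p₁ =>
    cases r with
    | nil => exact Or.inl (Walk.start_mem_support _)
    | @cons _ c₂ _ hrc r₁ =>
      have h12 : c₁ = c₂ := by
        by_contra hne
        have hsub : ({c₁, c₂} : Finset V) ⊆ K.neighborFinset aa := by
          intro t ht
          rw [K.mem_neighborFinset]
          rcases Finset.mem_insert.mp ht with rfl | ht
          · exact hpc
          · rw [Finset.mem_singleton] at ht; subst ht; exact hrc
        have hcard : ({c₁, c₂} : Finset V).card = 2 := by
          rw [Finset.card_insert_of_notMem (by simp [hne]), Finset.card_singleton]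
        have := Finset.card_le_card hsub
        have hdc : (K.neighborFinset aa).card ≤ 1 := hda
        omega
      subst h12
      obtain ⟨hp1, hcp1⟩ := (Walk.cons_isPath_iff _ _).mp hp
      obtain ⟨hr1, hcr1⟩ := (Walk.cons_isPath_iff _ _).mp hr
      rcases three_path_aux (p₁.length + r₁.length) hdeg p₁ r₁ hp1 hr1 hpc hcp1 hcr1
          le_rfl with h | h
      · exact Or.inl (by rw [Walk.support_cons]; exact List.mem_cons_of_mem _ h)
      · exact Or.inr (by rw [Walk.support_cons]; exact List.mem_cons_of_mem _ h)

lemma internal_degree {K : SimpleGraph V} {bb zz : V} :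
    ∀ {aa : V} (p : K.Walk aa bb), p.IsPath → zz ∈ p.support.tail → zz ≠ bb →
      2 ≤ K.degree zz := by
  intro aa p
  induction p with
  | nil => intro _ h _; simp [Walk.support_nil] at h
  | @cons a0 c₁ _ hpc p₁ ih =>
    intro hp hz hzb
    rw [Walk.support_cons] at hz
    simp only [List.tail_cons] at hz
    by_cases hzc : zz = c₁
    · subst hzc
      cases p₁ with
      | nil => exact absurd rfl hzb
      | @cons _ c₂ _ hqc p₂ =>
        obtain ⟨hp1, hcp1⟩ := (Walk.cons_isPath_iff _ _).mp hp
        have hne : a0 ≠ c₂ := by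
          intro h
          apply hcp1
          rw [h, Walk.support_cons]
          exact List.mem_cons_of_mem _ p₂.start_mem_support
        have hsub : ({a0, c₂} : Finset V) ⊆ K.neighborFinset zz := by
          intro t ht
          rw [K.mem_neighborFinset]
          rcases Finset.mem_insert.mp ht with rfl | ht
          · exact hpc.symm
          · rw [Finset.mem_singleton] at ht; subst ht; exact hqc
        have hcard : ({a0, c₂} : Finset V).card = 2 := by
          rw [Finset.card_insert_of_notMem (by simp [hne]), Finset.card_singleton]
        have := Finset.card_le_card hsub
        show 2 ≤ (K.neighborFinset zz).card
        omega
    · have hz' : zz ∈ p₁.support.tail := by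
        rcases (List.mem_cons).mp (p₁.support_eq_cons ▸ hz) with h | h
        · exact absurd h hzc
        · exact h
      exact ih ((Walk.cons_isPath_iff _ _).mp hp).1 hz' hzb

lemma no_three_ends {K : SimpleGraph V} (hdeg : ∀ t, K.degree t ≤ 2) {aa bb zz : V}
    (h1 : K.degree aa ≤ 1) (h2 : K.degree bb ≤ 1) (h3 : K.degree zz ≤ 1)
    (hab : aa ≠ bb) (hza : zz ≠ aa) (hzb : zz ≠ bb)
    (hrb : K.Reachable aa bb) (hrz : K.Reachable aa zz) : False := by
  obtain ⟨wp⟩ := hrb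
  obtain ⟨wr⟩ := hrz
  rcases three_path hdeg h1 wp.bypass wr.bypass wp.bypass_isPath wr.bypass_isPath with h | h
  · have hz : zz ∈ wp.bypass.support.tail := by
      rcases (List.mem_cons).mp (wp.bypass.support_eq_cons ▸ h) with h' | h'
      · exact absurd h' hza
      · exact h'
    have := internal_degree wp.bypass wp.bypass_isPath hz hzb
    omega
  · have hz : bb ∈ wr.bypass.support.tail := by
      rcases (List.mem_cons).mp (wr.bypass.support_eq_cons ▸ h) with h' | h'
      · exact absurd h'.symm hab
      · exact h'
    have := internal_degree wr.bypass wr.bypass_isPath hz (fun h' => hzb h'.symm)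
    omega

end Walks


section Fan

variable {V : Type*} [Fintype V] [DecidableEq V]

open SimpleGraph

/-- Vizing multifan at `x` (with respect to the uncolored edge `xy`), head-first; `y` is last. -/
inductive IsFan (H : SimpleGraph V) (x y : V) {k : ℕ} (c : Sym2 V → Fin k) : List V → Prop
  | base : IsFan H x y c [y]
  | cons {z : V} {L : List V} (hfan : IsFan H x y c L) (hz : z ∉ L) (hadj : H.Adj x z)
      (hw : ∃ u ∈ L, ¬ Pres H c u (c s(x, z))) : IsFan H x y c (z :: L)

variable {H : SimpleGraph V} {x y : V} {k : ℕ} {c : Sym2 V → Fin k} {L : List V}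

lemma IsFan.mem_y (h : IsFan H x y c L) : y ∈ L := by
  induction h with
  | base => simp
  | cons hfan hz hadj hw ih => exact List.mem_cons_of_mem _ ih

lemma IsFan.adj_or_eq (h : IsFan H x y c L) : ∀ u ∈ L, u = y ∨ H.Adj x u := by
  induction h with
  | base =>
    intro u hu
    rw [List.mem_singleton] at hu
    exact Or.inl hu
  | cons hfan hz hadj hw ih =>
    intro u hu
    rcases List.mem_cons.mp hu with rfl | hu
    · exact Or.inr hadj
    · exact ih u hu

lemma IsFan.ne_x (h : IsFan H x y c L) (hyx : y ≠ x) : ∀ u ∈ L, u ≠ x := by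
  intro u hu
  rcases h.adj_or_eq u hu with rfl | hadj
  · exact hyx
  · exact fun he => H.loopless.irrefl x (he ▸ hadj)

lemma IsFan.nodup (h : IsFan H x y c L) : L.Nodup := by
  induction h with
  | base => simp
  | cons hfan hz hadj hw ih => exact List.nodup_cons.mpr ⟨‹_ ∉ _›, ih⟩

lemma IsFan.tail {z : V} (h : IsFan H x y c (z :: L)) (hL : L ≠ []) : IsFan H x y c L := by
  cases h with
  | base => exact absurd rfl hL
  | cons hfan hz hadj hw => exact hfan

lemma IsFan.update (hyx : y ≠ x) {z₀ : V} {a : Fin k} (h : IsFan H x y c L) :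
    z₀ ∉ L → IsFan H x y (Function.update c s(x, z₀) a) L := by
  induction h with
  | base => exact fun _ => IsFan.base
  | @cons z L hfan hz hadj hw ih =>
    intro hz₀
    have hzz₀ : z ≠ z₀ := fun h' => hz₀ (h' ▸ List.mem_cons_self)
    refine IsFan.cons (ih (fun hm => hz₀ (List.mem_cons_of_mem _ hm))) hz hadj ?_
    obtain ⟨u, hu, hmiss⟩ := hw
    have hux : u ≠ x := hfan.ne_x hyx u hu
    have huz₀ : u ≠ z₀ := fun h' => hz₀ (h' ▸ List.mem_cons_of_mem _ hu)
    have hedge : Function.update c s(x, z₀) a s(x, z) = c s(x, z) :=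
      Function.update_of_ne (fun h' => hzz₀ (Sym2.congr_right.mp h')) _ _
    rw [hedge]
    exact ⟨u, hu, fun hp => hmiss ((pres_update_of_ne hux huz₀).mp hp)⟩

/-- Part (1) of the multifan lemma: no color is missing at both `x` and a fan vertex. -/
theorem fanA (hyx : y ≠ x)
    (hbase : ∀ c'' : Sym2 V → Fin k, Proper H c'' → ∀ d : Fin k,
      ¬ Pres H c'' x d → ¬ Pres H c'' y d → False) :
    ∀ (L : List V) (c : Sym2 V → Fin k), Proper H c → IsFan H x y c L →
      ∀ v ∈ L, ∀ a : Fin k, ¬ Pres H c x a → ¬ Pres H c v a → False := by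
  intro L
  induction L with
  | nil => intro c _ _ v hv; simp at hv
  | cons z L ih =>
    intro c hc hfan v hv a hxa hva
    rcases List.mem_cons.mp hv with rfl | hvL
    · cases hfan with
      | base => exact hbase c hc a hxa hva
      | cons hfan' hz hadj hw =>
        obtain ⟨u, hu, hmiss⟩ := hw
        have hβa : c s(x, v) ≠ a := fun h => hxa ⟨v, hadj, h⟩
        have hc' : Proper H (Function.update c s(x, v) a) := proper_update hc hxa hva
        have hux : u ≠ x := hfan'.ne_x hyx u hu
        have huz : u ≠ v := fun h => hz (h ▸ hu)
        have hx' : ¬ Pres H (Function.update c s(x, v) a) x (c s(x, v)) :=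
          miss_update_freed hc hadj hβa
        have hu' : ¬ Pres H (Function.update c s(x, v) a) u (c s(x, v)) :=
          fun hp => hmiss ((pres_update_of_ne hux huz).mp hp)
        exact ih _ hc' (hfan'.update hyx hz) u hu _ hx' hu'
    · have hL : L ≠ [] := by rintro rfl; simp at hvL
      exact ih c hc (hfan.tail hL) v hvL a hxa hva

lemma miss_swap_transfer {a γ : Fin k} {v u' : V} {β : Fin k}
    (hβa : β ≠ a) (hm : ¬ Pres H c u' β)
    (hua : Pres H (kswap (kempe H c a γ) v a γ c) u' a) :
    ¬ Pres H (kswap (kempe H c a γ) v a γ c) u' β := by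
  intro hp
  by_cases hβγ : β = γ
  · by_cases hru : (kempe H c a γ).Reachable v u'
    · exact miss_kswap_reach hru (hβγ ▸ hm) hua
    · exact hm ((pres_kswap_of_not_reach hru β).mp hp)
  · exact hm ((pres_kswap_other (fun u w (h : (kempe H c a γ).Adj u w) => h.2) hβa hβγ).mp hp)

lemma fan_swap_aux {a γ : Fin k} {v : V} (hxa : ¬ Pres H c x a)
    (hnr : ¬ (kempe H c a γ).Reachable v x) :
    ∀ (L : List V), IsFan H x y c L →
      (∀ u ∈ L, Pres H (kswap (kempe H c a γ) v a γ c) u a) →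
      IsFan H x y (kswap (kempe H c a γ) v a γ c) L := by
  intro L h
  induction h with
  | base => exact fun _ => IsFan.base
  | @cons z L hfan hz hadj hw ih =>
    intro hall
    refine IsFan.cons (ih (fun u hu => hall u (List.mem_cons_of_mem _ hu))) hz hadj ?_
    obtain ⟨u, hu, hmiss⟩ := hw
    rw [kswap_eq_of_not_reach hnr z]
    have hβa : c s(x, z) ≠ a := fun h' => hxa ⟨z, hadj, h'⟩
    exact ⟨u, hu, miss_swap_transfer hβa hmiss (hall u (List.mem_cons_of_mem _ hu))⟩

lemma fan_swap_false (hyx : y ≠ x) (hc : Proper H c)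
    (hbase : ∀ c'' : Sym2 V → Fin k, Proper H c'' → ∀ d : Fin k,
      ¬ Pres H c'' x d → ¬ Pres H c'' y d → False)
    {a γ : Fin k} (hxa : ¬ Pres H c x a) {v : V}
    (hnr : ¬ (kempe H c a γ).Reachable v x) :
    ∀ L, IsFan H x y c L → ∀ u ∈ L,
      ¬ Pres H (kswap (kempe H c a γ) v a γ c) u a → False := by
  intro L
  induction L with
  | nil => intro _ u hu; simp at hu
  | cons z L ih =>
    intro hfan u hu hmiss
    have hψ : Proper H (kswap (kempe H c a γ) v a γ c) := proper_kswap hc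
    have hxψ : ¬ Pres H (kswap (kempe H c a γ) v a γ c) x a :=
      fun hp => hxa ((pres_kswap_of_not_reach hnr a).mp hp)
    rcases List.mem_cons.mp hu with rfl | huL
    · by_cases hex : ∃ u' ∈ L, ¬ Pres H (kswap (kempe H c a γ) v a γ c) u' a
      · obtain ⟨u', hu', h'⟩ := hex
        have hL : L ≠ [] := by rintro rfl; simp at hu'
        exact ih (hfan.tail hL) u' hu' h'
      · push_neg at hex
        cases hfan with
        | base => exact hbase _ hψ a hxψ hmiss
        | cons hfan' hz hadj hw =>
          have hfanψL : IsFan H x y (kswap (kempe H c a γ) v a γ c) L :=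
            fan_swap_aux hxa hnr L hfan' hex
          obtain ⟨u', hu', hm'⟩ := hw
          have hβa : c s(x, u) ≠ a := fun h' => hxa ⟨u, hadj, h'⟩
          have hwψ : ¬ Pres H (kswap (kempe H c a γ) v a γ c) u'
              (kswap (kempe H c a γ) v a γ c s(x, u)) := by
            rw [kswap_eq_of_not_reach hnr u]
            exact miss_swap_transfer hβa hm' (hex u' hu')
          have hfanψ : IsFan H x y (kswap (kempe H c a γ) v a γ c) (u :: L) :=
            IsFan.cons hfanψL hz hadj ⟨u', hu', hwψ⟩
          exact fanA hyx hbase (u :: L) _ hψ hfanψ u (List.mem_cons_self) a hxψ hmiss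
    · have hL : L ≠ [] := by rintro rfl; simp at huL
      exact ih (hfan.tail hL) u huL hmiss

/-- Part (2) of the multifan lemma: missing color sets of fan vertices are pairwise disjoint. -/
theorem fanB (hyx : y ≠ x) (hc : Proper H c)
    (hbase : ∀ c'' : Sym2 V → Fin k, Proper H c'' → ∀ d : Fin k,
      ¬ Pres H c'' x d → ¬ Pres H c'' y d → False)
    (hdx : H.degree x < k) (hfan : IsFan H x y c L) {v' w' : V}
    (hv : v' ∈ L) (hw : w' ∈ L) (hvw : v' ≠ w') {γ : Fin k}
    (hmv : ¬ Pres H c v' γ) (hmw : ¬ Pres H c w' γ) : False := by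
  obtain ⟨a, hxa⟩ := exists_miss hc hdx
  have hdeg2 : ∀ t, (kempe H c a γ).degree t ≤ 2 := fun t => kempe_degree_le_two hc t
  have hd1 : (kempe H c a γ).degree v' ≤ 1 := kempe_degree_le_one hc (Or.inr rfl) hmv
  have hd2 : (kempe H c a γ).degree w' ≤ 1 := kempe_degree_le_one hc (Or.inr rfl) hmw
  have hdx1 : (kempe H c a γ).degree x ≤ 1 := kempe_degree_le_one hc (Or.inl rfl) hxa
  have hvx : v' ≠ x := hfan.ne_x hyx v' hv
  have hwx : w' ≠ x := hfan.ne_x hyx w' hw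
  have hone : ¬ (kempe H c a γ).Reachable v' x ∨ ¬ (kempe H c a γ).Reachable w' x := by
    by_contra h
    push_neg at h
    exact no_three_ends hdeg2 hd1 hdx1 hd2 hvx (fun h' => hvw h'.symm) hwx h.1
      (h.1.trans h.2.symm)
  rcases hone with hnr | hnr
  · exact fan_swap_false hyx hc hbase hxa hnr L hfan v' hv
      (miss_kswap_reach (SimpleGraph.Reachable.refl v') hmv)
  · exact fan_swap_false hyx hc hbase hxa hnr L hfan w' hw
      (miss_kswap_reach (SimpleGraph.Reachable.refl w') hmw)

end Fan

end VAL

open SCF VAL in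
/-- Vizing's Adjacency Lemma: if `xy` is an edge of a critical graph `G`,
then at least `Δ(G) - d_G(y) + 1` vertices in `N(x) \ {y}` have degree `Δ(G)`. -/
theorem stmt18 {V : Type*} [Fintype V] [DecidableEq V] (G : SimpleGraph V)
    [DecidableRel G.Adj] (hG : IsCritical G) (x y : V) (hxy : G.Adj x y) :
    G.maxDegree - G.degree y + 1 ≤
      (((G.neighborFinset x).erase y).filter fun z => G.degree z = G.maxDegree).card := by
  classical
  obtain ⟨k, hk2, hΔ, hχ, hlt⟩ := hG
  have hyx : y ≠ x := hxy.ne'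
  set H := G.deleteEdges {s(x, y)} with hH
  have hHle : H ≤ G := SimpleGraph.deleteEdges_le _
  have hnadj : ¬ H.Adj x y := by
    rw [hH, SimpleGraph.deleteEdges_adj]
    exact fun h => h.2 rfl
  have hHne : H ≠ G := fun h => hnadj (h.symm ▸ hxy)
  have hHlt : H < G := lt_of_le_of_ne hHle hHne
  obtain ⟨c, hc⟩ := exists_proper_of_chromIdx_le (hlt H hHlt)
  have hGnone : ∀ c' : Sym2 V → Fin k, ¬ Proper G c' := by
    intro c' hp
    have := chromIdx_le_of_proper c' hp
    omega
  have hbase : ∀ c'' : Sym2 V → Fin k, Proper H c'' → ∀ d : Fin k,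
      ¬ Pres H c'' x d → ¬ Pres H c'' y d → False := by
    intro c'' hc'' d hxd hyd
    exact no_common_miss hGnone hc'' hxd hyd
  -- neighbor sets of H
  have hadjH : ∀ u w : V, H.Adj u w ↔ G.Adj u w ∧ s(u, w) ≠ s(x, y) := by
    intro u w
    rw [hH, SimpleGraph.deleteEdges_adj]
    simp
  have hNy : H.neighborFinset y = (G.neighborFinset y).erase x := by
    ext w
    rw [SimpleGraph.mem_neighborFinset, Finset.mem_erase, SimpleGraph.mem_neighborFinset,
      hadjH]
    constructor
    · rintro ⟨hadj, hne⟩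
      refine ⟨fun hwx => hne ?_, hadj⟩
      rw [hwx]
      exact Sym2.eq_swap
    · rintro ⟨hwx, hadj⟩
      refine ⟨hadj, fun hEq => ?_⟩
      rcases Sym2.eq_iff.mp hEq with ⟨h1, _⟩ | ⟨_, h2⟩
      · exact hyx h1
      · exact hwx h2
  have hNx : H.neighborFinset x = (G.neighborFinset x).erase y := by
    ext w
    rw [SimpleGraph.mem_neighborFinset, Finset.mem_erase, SimpleGraph.mem_neighborFinset,
      hadjH]
    constructor
    · rintro ⟨hadj, hne⟩
      refine ⟨fun hwy => hne ?_, hadj⟩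
      rw [hwy]
    · rintro ⟨hwy, hadj⟩
      refine ⟨hadj, fun hEq => ?_⟩
      rcases Sym2.eq_iff.mp hEq with ⟨_, h2⟩ | ⟨h1, _⟩
      · exact hwy h2
      · exact hyx h1.symm
  have hNu : ∀ u, u ≠ x → u ≠ y → H.neighborFinset u = G.neighborFinset u := by
    intro u hux huy
    ext w
    rw [SimpleGraph.mem_neighborFinset, SimpleGraph.mem_neighborFinset, hadjH]
    exact ⟨fun h => h.1, fun h => ⟨h, sym2_ne_of_ne hux huy⟩⟩
  have hdy : H.degree y = G.degree y - 1 := by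
    have hxm : x ∈ G.neighborFinset y := (G.mem_neighborFinset y x).mpr hxy.symm
    have := congrArg Finset.card hNy
    rwa [Finset.card_erase_of_mem hxm] at this
  have hdxd : H.degree x = G.degree x - 1 := by
    have hym : y ∈ G.neighborFinset x := (G.mem_neighborFinset x y).mpr hxy
    have := congrArg Finset.card hNx
    rwa [Finset.card_erase_of_mem hym] at this
  have hdu : ∀ u, u ≠ x → u ≠ y → H.degree u = G.degree u :=
    fun u hux huy => congrArg Finset.card (hNu u hux huy)
  have hdk : ∀ u, G.degree u ≤ k := fun u => hΔ ▸ G.degree_le_maxDegree u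
  have hdy1 : 1 ≤ G.degree y := by
    have : (G.neighborFinset y).Nonempty := ⟨x, (G.mem_neighborFinset y x).mpr hxy.symm⟩
    exact Finset.card_pos.mpr this
  have hdx1 : 1 ≤ G.degree x := by
    have : (G.neighborFinset x).Nonempty := ⟨y, (G.mem_neighborFinset x y).mpr hxy⟩
    exact Finset.card_pos.mpr this
  have hdxk : H.degree x < k := by
    have := hdk x
    omega
  -- a maximum-length fan
  set T : Set ℕ := {n | ∃ L, IsFan H x y c L ∧ L.length = n} with hT
  have hT1 : (1 : ℕ) ∈ T := ⟨[y], IsFan.base, rfl⟩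
  have hTb : BddAbove T := by
    refine ⟨Fintype.card V, fun n hn => ?_⟩
    obtain ⟨L, hL, rfl⟩ := hn
    exact hL.nodup.length_le_card
  obtain ⟨L, hfan, hlen⟩ := Nat.sSup_mem ⟨1, hT1⟩ hTb
  have h1m : 1 ≤ sSup T := le_csSup hTb hT1
  have hmax : ∀ z, H.Adj x z → z ∉ L → ¬ ∃ u ∈ L, ¬ Pres H c u (c s(x, z)) := by
    intro z hadj hz hex
    have hmem : (z :: L).length ∈ T := ⟨z :: L, IsFan.cons hfan hz hadj hex, rfl⟩
    have hle := le_csSup hTb hmem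
    rw [List.length_cons, hlen] at hle
    omega
  -- missing color sets
  set missF : V → Finset (Fin k) := fun u => Finset.univ \ presF H c u with hmissF
  have hmiss_mem : ∀ u d, d ∈ missF u ↔ ¬ Pres H c u d := by
    intro u d
    simp [hmissF, mem_presF]
  have hmiss_card : ∀ u, (missF u).card = k - H.degree u := by
    intro u
    rw [hmissF]
    rw [Finset.card_sdiff_of_subset (Finset.subset_univ _), Finset.card_univ, Fintype.card_fin,
      card_presF hc]
  set D := L.toFinset with hD
  have hDcard : D.card = sSup T := by rw [hD, List.toFinset_card_of_nodup hfan.nodup, hlen]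
  have hyD : y ∈ D := List.mem_toFinset.mpr hfan.mem_y
  have hmemD : ∀ u ∈ D, u ∈ L := fun u hu => List.mem_toFinset.mp hu
  have hdisj : ∀ u ∈ D, ∀ u' ∈ D, u ≠ u' → Disjoint (missF u) (missF u') := by
    intro u hu u' hu' hne
    rw [Finset.disjoint_left]
    intro d hd hd'
    exact fanB hyx hc hbase (by convert hdxk) hfan (hmemD u hu) (hmemD u' hu') hne
      ((hmiss_mem _ _).mp hd) ((hmiss_mem _ _).mp hd')
  have hsub : D.biUnion missF ⊆ (D.erase y).image (fun z => c s(x, z)) := by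
    intro d hd
    obtain ⟨u, hu, hdu⟩ := Finset.mem_biUnion.mp hd
    have hmd : ¬ Pres H c u d := (hmiss_mem _ _).mp hdu
    have hpx : Pres H c x d := by
      by_contra hnp
      exact fanA hyx hbase L c hc hfan u (hmemD u hu) d hnp hmd
    obtain ⟨z, hadj, hcol⟩ := hpx
    have hzL : z ∈ L := by
      by_contra hz
      exact hmax z hadj hz ⟨u, hmemD u hu, by rw [hcol]; exact hmd⟩
    have hzy : z ≠ y := fun h => hnadj (h ▸ hadj)
    exact Finset.mem_image.mpr ⟨z, Finset.mem_erase.mpr ⟨hzy, List.mem_toFinset.mpr hzL⟩, hcol⟩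
  have hcount : ∑ u ∈ D, (missF u).card ≤ sSup T - 1 := by
    rw [← Finset.card_biUnion hdisj]
    calc (D.biUnion missF).card ≤ ((D.erase y).image (fun z => c s(x, z))).card :=
          Finset.card_le_card hsub
      _ ≤ (D.erase y).card := Finset.card_image_le
      _ = sSup T - 1 := by rw [Finset.card_erase_of_mem hyD, hDcard]
  have hsplit : ∑ u ∈ D.erase y, (missF u).card + (missF y).card
      = ∑ u ∈ D, (missF u).card := Finset.sum_erase_add D _ hyD
  set B := (D.erase y).filter (fun z => G.degree z = k) with hB
  have hBsub : B ⊆ D.erase y := Finset.filter_subset _ _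
  have hlow : (D.erase y).card - B.card ≤ ∑ u ∈ D.erase y, (missF u).card := by
    have h1 : ∀ u ∈ (D.erase y) \ B, 1 ≤ (missF u).card := by
      intro u hu
      obtain ⟨huE, huB⟩ := Finset.mem_sdiff.mp hu
      have hney : u ≠ y := (Finset.mem_erase.mp huE).1
      have hux : u ≠ x := hfan.ne_x hyx u (hmemD u (Finset.mem_of_mem_erase huE))
      rw [hmiss_card u, hdu u hux hney]
      have hnk : G.degree u ≠ k := fun h => huB (Finset.mem_filter.mpr ⟨huE, h⟩)
      have := hdk u
      omega
    calc (D.erase y).card - B.card = ((D.erase y) \ B).card := (Finset.card_sdiff_of_subset hBsub).symm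
      _ = ∑ _u ∈ (D.erase y) \ B, 1 := by simp
      _ ≤ ∑ u ∈ (D.erase y) \ B, (missF u).card := Finset.sum_le_sum h1
      _ ≤ ∑ u ∈ D.erase y, (missF u).card :=
          Finset.sum_le_sum_of_subset (Finset.sdiff_subset)
  have hmy : (missF y).card = k - (G.degree y - 1) := by rw [hmiss_card, hdy]
  have hecard : (D.erase y).card = sSup T - 1 := by
    rw [Finset.card_erase_of_mem hyD, hDcard]
  have hBle : B.card ≤
      (((G.neighborFinset x).erase y).filter fun z => G.degree z = k).card := by
    apply Finset.card_le_card
    intro z hz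
    obtain ⟨hzE, hzdeg⟩ := Finset.mem_filter.mp hz
    obtain ⟨hzy, hzD⟩ := Finset.mem_erase.mp hzE
    have hzL := hmemD z hzD
    have hadj : G.Adj x z := by
      rcases hfan.adj_or_eq z hzL with rfl | h
      · exact absurd rfl hzy
      · exact ((hadjH x z).mp h).1
    exact Finset.mem_filter.mpr
      ⟨Finset.mem_erase.mpr ⟨hzy, (G.mem_neighborFinset x z).mpr hadj⟩, hzdeg⟩
  rw [hΔ]
  have hdyk := hdk y
  have h2 : ∑ u ∈ D.erase y, (missF u).card + (missF y).card ≤ sSup T - 1 := by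
    rw [hsplit]; exact hcount
  have h3 : sSup T - 1 ≤ ∑ u ∈ D.erase y, (missF u).card + B.card := by
    rw [← hecard]
    exact Nat.sub_le_iff_le_add.mp hlow
  have h4 : (missF y).card ≤ B.card :=
    Nat.le_of_add_le_add_left (h2.trans h3)
  calc k - G.degree y + 1 = (missF y).card := by rw [hmy]; omega
    _ ≤ B.card := h4
    _ ≤ _ := hBle
end

section
/- If G is a k-critical simple graph (k ≥ 2), then μ_f(G) ≥ (|V(G)| − ⌊s(G)/k⌋)/2, where s(G) = k|V(G)| − 2|E(G)| is the k-deficiency of G; consequently α(G) ≤ (|V(G)| + ⌊s(G)/k⌋)/2. -/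
open Finset

open SCF

private lemma frac_matching_of_hall {V : Type*} [Fintype V] [DecidableEq V]
    (G : SimpleGraph V) [DecidableRel G.Adj] (d : ℕ)
    (hall : ∀ A : Finset V, A.card ≤ (A.biUnion (fun v => G.neighborFinset v)).card + d) :
    ∃ f : Sym2 V → ℝ, IsFracMatching G f ∧
      ((Fintype.card V : ℝ) - d) / 2 ≤ weight G f := by
  classical
  set t : V → Finset (V ⊕ Fin d) :=
    fun v => (G.neighborFinset v).image Sum.inl ∪ Finset.univ.image Sum.inr with ht
  have hhall : ∀ A : Finset V, A.card ≤ (A.biUnion t).card := by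
    intro A
    rcases A.eq_empty_or_nonempty with h | h
    · simp [h]
    · have he : A.biUnion t =
          (A.biUnion (fun v => G.neighborFinset v)).image Sum.inl ∪ Finset.univ.image Sum.inr := by
        ext x
        simp only [Finset.mem_biUnion, ht, Finset.mem_union, Finset.mem_image]
        constructor
        · rintro ⟨a, ha, hx⟩
          rcases hx with ⟨u, hu, rfl⟩ | hx
          · exact Or.inl ⟨u, ⟨a, ha, hu⟩, rfl⟩
          · exact Or.inr hx
        · rintro (⟨u, ⟨a, ha, hu⟩, rfl⟩ | hx)
          · exact ⟨a, ha, Or.inl ⟨u, hu, rfl⟩⟩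
          · obtain ⟨a, ha⟩ := h
            exact ⟨a, ha, Or.inr hx⟩
      have hdisj : Disjoint ((A.biUnion (fun v => G.neighborFinset v)).image Sum.inl)
          ((Finset.univ : Finset (Fin d)).image Sum.inr) := by
        simp only [Finset.disjoint_left, Finset.mem_image]
        rintro x ⟨u, hu, rfl⟩ ⟨j, hj, hxj⟩
        exact Sum.inl_ne_inr hxj.symm
      rw [he, Finset.card_union_of_disjoint hdisj,
        Finset.card_image_of_injective _ Sum.inl_injective,
        Finset.card_image_of_injective _ Sum.inr_injective]
      simpa using hall A
  obtain ⟨g, hginj, hgmem⟩ := (Finset.all_card_le_biUnion_card_iff_exists_injective t).mp hhall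
  set φ : V → V := fun v => Sum.elim id (fun _ => v) (g v) with hφ
  set T : Finset V := Finset.univ.filter (fun v => (g v).isLeft) with hT
  have hgT : ∀ v ∈ T, g v = Sum.inl (φ v) := by
    intro v hv
    rw [hT, Finset.mem_filter] at hv
    rcases hg : g v with u | j
    · simp [hφ, hg]
    · rw [hg] at hv; simp at hv
  have hadj : ∀ v ∈ T, G.Adj v (φ v) := by
    intro v hv
    have hm := hgmem v
    rw [hgT v hv, ht] at hm
    simp only [Finset.mem_union, Finset.mem_image] at hm
    rcases hm with ⟨u, hu, hu2⟩ | ⟨j, _, hj⟩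
    · have huv : u = φ v := Sum.inl_injective hu2
      rw [← huv]
      exact (SimpleGraph.mem_neighborFinset _ _ _).mp hu
    · exact absurd hj (by simp)
  set p : V → Sym2 V := fun v => s(v, φ v) with hp
  set f : Sym2 V → ℝ := fun e => ((T.filter (fun v => p v = e)).card : ℝ) / 2 with hf
  have hpedge : ∀ v ∈ T, p v ∈ G.edgeFinset := by
    intro v hv
    rw [SimpleGraph.mem_edgeFinset, hp]
    exact hadj v hv
  have hfib2 : ∀ e : Sym2 V, (T.filter (fun v => p v = e)).card ≤ 2 := by
    intro e
    induction e using Sym2.ind with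
    | _ x y =>
      have hsub : T.filter (fun v => p v = s(x, y)) ⊆ {x, y} := by
        intro v hv
        rw [Finset.mem_filter] at hv
        have hme : v ∈ p v := by rw [hp]; exact Sym2.mem_mk_left _ _
        rw [hv.2] at hme
        rw [Sym2.mem_iff] at hme
        simpa using hme
      calc (T.filter (fun v => p v = s(x, y))).card ≤ ({x, y} : Finset V).card :=
            Finset.card_le_card hsub
        _ ≤ 2 := Finset.card_le_two
  have hfm : IsFracMatching G f := by
    refine ⟨fun e => ⟨by positivity, ?_⟩, ?_, ?_⟩
    · have h2 : ((T.filter (fun v => p v = e)).card : ℝ) ≤ 2 := by exact_mod_cast hfib2 e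
      rw [hf]; simp only
      linarith
    · intro e he
      have hemp : T.filter (fun v => p v = e) = ∅ := by
        rw [Finset.filter_eq_empty_iff]
        intro v hv hpe
        exact he (hpe ▸ (SimpleGraph.mem_edgeFinset.mp (hpedge v hv)))
      rw [hf]; simp [hemp]
    · intro w
      set T' : Finset V := T.filter (fun v => w ∈ p v) with hT'
      have hnat : ∑ e ∈ G.edgeFinset,
          (if w ∈ e then (T.filter (fun v => p v = e)).card else 0) = T'.card := by
        have h1 : T'.card = ∑ e ∈ G.edgeFinset, (T'.filter (fun v => p v = e)).card :=
          Finset.card_eq_sum_card_fiberwise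
            (fun v hv => hpedge v (Finset.mem_filter.mp hv).1)
        rw [h1]
        apply Finset.sum_congr rfl
        intro e he
        by_cases hwe : w ∈ e
        · rw [if_pos hwe]
          congr 1
          ext v
          have himp : p v = e → w ∈ p v := fun h3 => by rw [h3]; exact hwe
          simp only [hT', hT, Finset.mem_filter, Finset.mem_univ, true_and]
          tauto
        · rw [if_neg hwe]
          have : T'.filter (fun v => p v = e) = ∅ := by
            rw [Finset.filter_eq_empty_iff]
            intro v hv hpe
            have hv2 : v ∈ T.filter (fun v => w ∈ p v) := by rwa [hT'] at hv
            have hw2 : w ∈ p v := (Finset.mem_filter.mp hv2).2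
            rw [hpe] at hw2
            exact hwe hw2
          simp [this]
      have hT'2 : T'.card ≤ 2 := by
        have hsub : T' ⊆ insert w (Finset.univ.filter (fun v => g v = Sum.inl w)) := by
          intro v hv
          rw [hT', Finset.mem_filter] at hv
          obtain ⟨hvT, hw⟩ := hv
          rw [hp] at hw
          rw [Sym2.mem_iff] at hw
          rcases hw with rfl | hw
          · exact Finset.mem_insert_self _ _
          · refine Finset.mem_insert_of_mem ?_
            simp only [Finset.mem_filter, Finset.mem_univ, true_and]
            rw [hgT v hvT, hw]
        have h1 : (Finset.univ.filter (fun v => g v = Sum.inl w)).card ≤ 1 := by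
          apply Finset.card_le_one.mpr
          intro a ha b hb
          rw [Finset.mem_filter] at ha hb
          exact hginj (ha.2.trans hb.2.symm)
        calc T'.card ≤ _ := Finset.card_le_card hsub
          _ ≤ (Finset.univ.filter (fun v => g v = Sum.inl w)).card + 1 :=
            Finset.card_insert_le _ _
          _ ≤ 2 := by omega
      calc ∑ e ∈ G.edgeFinset, (if w ∈ e then f e else 0)
          = (∑ e ∈ G.edgeFinset,
              (if w ∈ e then ((T.filter (fun v => p v = e)).card : ℝ) else 0)) / 2 := by
            rw [Finset.sum_div]
            apply Finset.sum_congr rfl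
            intro e he
            rw [hf]; simp only
            split_ifs <;> simp
        _ = (T'.card : ℝ) / 2 := by
            congr 1
            rw [← hnat, Nat.cast_sum]
            apply Finset.sum_congr rfl
            intro e _
            split_ifs <;> simp
        _ ≤ 1 := by
            have : (T'.card : ℝ) ≤ 2 := by exact_mod_cast hT'2
            linarith
  have hweight : weight G f = (T.card : ℝ) / 2 := by
    have h1 : T.card = ∑ e ∈ G.edgeFinset, (T.filter (fun v => p v = e)).card :=
      Finset.card_eq_sum_card_fiberwise hpedge
    show (∑ e ∈ G.edgeFinset, f e) = (T.card : ℝ) / 2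
    rw [hf]; simp only
    rw [← Finset.sum_div]
    congr 1
    rw [h1]
    push_cast
    rfl
  have hTcard : Fintype.card V ≤ T.card + d := by
    have hsub : (Finset.univ.filter (fun v => ¬ (g v).isLeft)).image g ⊆
        Finset.univ.image Sum.inr := by
      intro x hx
      simp only [Finset.mem_image, Finset.mem_filter, Finset.mem_univ, true_and] at hx ⊢
      obtain ⟨v, hv, rfl⟩ := hx
      rcases hg : g v with u | j
      · rw [hg] at hv; simp at hv
      · exact ⟨j, rfl⟩
    have h2 := Finset.card_le_card hsub
    rw [Finset.card_image_of_injective _ hginj,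
      Finset.card_image_of_injective _ Sum.inr_injective, Finset.card_univ,
      Fintype.card_fin] at h2
    have h4 : (Finset.univ.filter (fun v => ¬ (g v).isLeft)) = Tᶜ := by
      ext v; simp [hT]
    rw [h4, Finset.card_compl] at h2
    have h5 : T.card ≤ Fintype.card V := by simpa using Finset.card_le_univ T
    omega
  refine ⟨f, hfm, ?_⟩
  rw [hweight]
  have h1 : (Fintype.card V : ℝ) ≤ (T.card : ℝ) + d := by exact_mod_cast hTcard
  linarith


/-- for a `k`-critical graph `G` with `s(G) = k|V(G)| - 2|E(G)|`,
`μ_f(G) ≥ (|V(G)| - ⌊s(G)/k⌋)/2` and `α(G) ≤ (|V(G)| + ⌊s(G)/k⌋)/2`. -/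
theorem stmt19 {V : Type*} [Fintype V] [DecidableEq V] (G : SimpleGraph V)
    [DecidableRel G.Adj] (k : ℕ) (hG : IsCriticalWith G k) (s : ℕ)
    (hs : s = k * Fintype.card V - 2 * G.edgeFinset.card) :
    ((Fintype.card V : ℝ) - ((s / k : ℕ) : ℝ)) / 2 ≤ nuF G ∧
      (alpha G : ℝ) ≤ ((Fintype.card V : ℝ) + ((s / k : ℕ) : ℝ)) / 2 := by
  classical
  obtain ⟨hk2, hmax, -, -⟩ := hG
  have hk : 0 < k := by omega
  have hdeg : ∀ v, G.degree v ≤ k := fun v => hmax ▸ G.degree_le_maxDegree v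
  have h2m : ∑ v : V, G.degree v = 2 * G.edgeFinset.card :=
    G.sum_degrees_eq_twice_card_edges
  -- counting lemma
  have hsum_le : ∀ A : Finset V,
      ∑ v ∈ A, G.degree v ≤ ∑ u ∈ A.biUnion (fun v => G.neighborFinset v), G.degree u := by
    intro A
    have hkey : (A.sigma fun v => G.neighborFinset v).card ≤
        ((A.biUnion (fun v => G.neighborFinset v)).sigma fun v => G.neighborFinset v).card := by
      apply Finset.card_le_card_of_injOn (fun x => ⟨x.2, x.1⟩)
      · intro x hx
        rw [Finset.mem_coe, Finset.mem_sigma] at hx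
        obtain ⟨h1, h2⟩ := hx
        rw [SimpleGraph.mem_neighborFinset] at h2
        rw [Finset.mem_coe, Finset.mem_sigma]
        constructor
        · rw [Finset.mem_biUnion]
          exact ⟨x.1, h1, (SimpleGraph.mem_neighborFinset _ _ _).mpr h2⟩
        · rw [SimpleGraph.mem_neighborFinset]
          exact h2.symm
      · rintro ⟨x1, x2⟩ _ ⟨y1, y2⟩ _ hxy
        have h1 : x2 = y2 := congrArg Sigma.fst hxy
        have h2 : x1 = y1 := congrArg Sigma.snd hxy
        subst h1; subst h2; rfl
    calc ∑ v ∈ A, G.degree v = (A.sigma fun v => G.neighborFinset v).card := by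
          rw [Finset.card_sigma]; rfl
      _ ≤ ((A.biUnion (fun v => G.neighborFinset v)).sigma fun v => G.neighborFinset v).card := hkey
      _ = ∑ u ∈ A.biUnion (fun v => G.neighborFinset v), G.degree u := by
          rw [Finset.card_sigma]; rfl
  have hall : ∀ A : Finset V, A.card ≤ (A.biUnion (fun v => G.neighborFinset v)).card + s / k := by
    intro A
    set NA := A.biUnion (fun v => G.neighborFinset v) with hNA
    have h1 : ∑ u ∈ NA, G.degree u ≤ k * NA.card := by
      calc ∑ u ∈ NA, G.degree u ≤ ∑ _u ∈ NA, k := Finset.sum_le_sum (fun u _ => hdeg u)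
        _ = k * NA.card := by rw [Finset.sum_const, smul_eq_mul, mul_comm]
    have hsplit : ∀ B : Finset V,
        ∑ v ∈ B, (k - G.degree v) + ∑ v ∈ B, G.degree v = k * B.card := by
      intro B
      rw [← Finset.sum_add_distrib]
      calc ∑ v ∈ B, (k - G.degree v + G.degree v) = ∑ _v ∈ B, k :=
            Finset.sum_congr rfl (fun v _ => Nat.sub_add_cancel (hdeg v))
        _ = k * B.card := by rw [Finset.sum_const, smul_eq_mul, mul_comm]
    have h3 : ∑ v ∈ A, (k - G.degree v) ≤ s := by
      have h4 := hsplit Finset.univ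
      rw [Finset.card_univ] at h4
      have h5 : ∑ v ∈ A, (k - G.degree v) ≤ ∑ v : V, (k - G.degree v) :=
        Finset.sum_le_sum_of_subset (Finset.subset_univ A)
      omega
    have h5 : k * A.card ≤ s + k * NA.card := by
      have h6 := hsum_le A
      rw [← hNA] at h6
      have h7 := hsplit A
      omega
    have h8 : A.card - NA.card ≤ s / k := by
      rw [Nat.le_div_iff_mul_le hk, Nat.sub_mul]
      have : A.card * k ≤ s + NA.card * k := by
        calc A.card * k = k * A.card := mul_comm _ _
          _ ≤ s + k * NA.card := h5
          _ = s + NA.card * k := by rw [mul_comm]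
      omega
    omega
  obtain ⟨f, hfm, hfw⟩ := frac_matching_of_hall G (s / k) hall
  have hbdd : BddAbove (weight G '' {f | IsFracMatching G f}) := by
    refine ⟨(G.edgeFinset.card : ℝ), ?_⟩
    rintro x ⟨f', hf', rfl⟩
    calc weight G f' ≤ ∑ _e ∈ G.edgeFinset, (1 : ℝ) :=
          Finset.sum_le_sum (fun e _ => (hf'.1 e).2)
      _ = (G.edgeFinset.card : ℝ) := by simp
  have hnu1 : ((Fintype.card V : ℝ) - ((s / k : ℕ) : ℝ)) / 2 ≤ nuF G :=
    le_trans hfw (le_csSup hbdd ⟨f, hfm, rfl⟩)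
  -- independence part
  have hub : ∀ f' : Sym2 V → ℝ, IsFracMatching G f' → ∀ S : Set V, IsIndepSet G S →
      weight G f' ≤ (Fintype.card V : ℝ) - S.ncard := by
    intro f' hf' S hS
    set C : Finset V := S.toFinsetᶜ with hC
    have hCe : ∀ e ∈ G.edgeFinset, f' e ≤ ∑ v ∈ C, (if v ∈ e then f' e else 0) := by
      intro e he
      induction e using Sym2.ind with
      | _ x y =>
        have hadj : G.Adj x y := by
          rwa [SimpleGraph.mem_edgeFinset, SimpleGraph.mem_edgeSet] at he
        have hnb : x ∉ S ∨ y ∉ S := by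
          by_contra hcon; push_neg at hcon; exact hS hcon.1 hcon.2 hadj
        have hnn : ∀ v ∈ C, 0 ≤ (if v ∈ s(x, y) then f' s(x, y) else 0) := by
          intro v _
          split_ifs
          · exact (hf'.1 _).1
          · exact le_refl 0
        rcases hnb with hx | hy
        · have hxC : x ∈ C := by
            rw [hC, Finset.mem_compl, Set.mem_toFinset]; exact hx
          have := Finset.single_le_sum hnn hxC
          simpa using this
        · have hyC : y ∈ C := by
            rw [hC, Finset.mem_compl, Set.mem_toFinset]; exact hy
          have := Finset.single_le_sum hnn hyC
          simpa using this
    have hScard : S.toFinset.card ≤ Fintype.card V := by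
      rw [← Finset.card_univ]; exact Finset.card_le_card (Finset.subset_univ _)
    calc weight G f' = ∑ e ∈ G.edgeFinset, f' e := rfl
      _ ≤ ∑ e ∈ G.edgeFinset, ∑ v ∈ C, (if v ∈ e then f' e else 0) :=
          Finset.sum_le_sum hCe
      _ = ∑ v ∈ C, ∑ e ∈ G.edgeFinset, (if v ∈ e then f' e else 0) := Finset.sum_comm
      _ ≤ ∑ _v ∈ C, (1 : ℝ) := Finset.sum_le_sum (fun v _ => hf'.2.2 v)
      _ = (C.card : ℝ) := by simp
      _ ≤ (Fintype.card V : ℝ) - S.ncard := by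
        rw [hC, Finset.card_compl, Set.ncard_eq_toFinset_card' S]
        rw [Nat.cast_sub hScard]
  have halpha : ∃ S : Set V, IsIndepSet G S ∧ S.ncard = alpha G := by
    have hne : {n | ∃ s' : Set V, IsIndepSet G s' ∧ s'.ncard = n}.Nonempty :=
      ⟨0, ∅, fun u hu => absurd hu (Set.notMem_empty u), by simp⟩
    have hbd : BddAbove {n | ∃ s' : Set V, IsIndepSet G s' ∧ s'.ncard = n} := by
      refine ⟨Fintype.card V, ?_⟩
      rintro n ⟨S, -, rfl⟩
      calc S.ncard ≤ (Set.univ : Set V).ncard :=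
            Set.ncard_le_ncard (Set.subset_univ S) Set.finite_univ
        _ = Fintype.card V := by rw [Set.ncard_univ, Nat.card_eq_fintype_card]
    exact Nat.sSup_mem hne hbd
  have hnu2 : nuF G ≤ (Fintype.card V : ℝ) - alpha G := by
    obtain ⟨S, hS, hcard⟩ := halpha
    apply csSup_le
    · exact ⟨weight G (fun _ => 0), (fun _ => 0), ⟨fun e => by norm_num,
        fun e _ => rfl, fun v => by simp⟩, rfl⟩
    · rintro x ⟨f', hf', rfl⟩
      have := hub f' hf' S hS
      rwa [hcard] at this
  have hα_le : (alpha G : ℝ) ≤ (Fintype.card V : ℝ) := by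
    obtain ⟨S, -, hcard⟩ := halpha
    rw [← hcard]
    have : S.ncard ≤ Fintype.card V := by
      calc S.ncard ≤ (Set.univ : Set V).ncard :=
            Set.ncard_le_ncard (Set.subset_univ S) Set.finite_univ
        _ = Fintype.card V := by rw [Set.ncard_univ, Nat.card_eq_fintype_card]
    exact_mod_cast this
  exact ⟨hnu1, by linarith⟩
end
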